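/- arXiv:2004.04262 — 2 statements merged into one kernel-verified Lean document; each statement's English description precedes it below -/
import Mathlib

section
/- For smooth functions u, Ψ on the interval [-π/ω, π/ω] (ω > 0) satisfying Neumann boundary conditions u'(±π/ω) = Ψ'(±π/ω) = 0, if u and Ψ satisfy the equation ν(u'' + 2u) + u'Ψ' + u² = 0 on the interval with ν > 0 and u = Ψ'', then the integral of u over [-π/ω, π/ω] equals zero. -/
open intervalIntegral

/-- Integrating the 1D stationary equation ν(u''+2u) + u'Ψ' + u² = 0 with u = Ψ''
and Neumann boundary conditions yields ∫ u = 0. -/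
theorem stmt_0 (ω ν : ℝ) (hω : 0 < ω) (hν : 0 < ν) (u Ψ : ℝ → ℝ)
    (hu : ContDiff ℝ 2 u) (hΨ : ContDiff ℝ 4 Ψ)
    (hbu1 : deriv u (-(Real.pi / ω)) = 0) (hbu2 : deriv u (Real.pi / ω) = 0)
    (hbΨ1 : deriv Ψ (-(Real.pi / ω)) = 0) (hbΨ2 : deriv Ψ (Real.pi / ω) = 0)
    (huΨ : ∀ φ ∈ Set.Icc (-(Real.pi / ω)) (Real.pi / ω), u φ = deriv (deriv Ψ) φ)
    (heq : ∀ φ ∈ Set.Icc (-(Real.pi / ω)) (Real.pi / ω),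
      ν * (deriv (deriv u) φ + 2 * u φ) + deriv u φ * deriv Ψ φ + (u φ) ^ 2 = 0) :
    ∫ φ in (-(Real.pi / ω))..(Real.pi / ω), u φ = 0 := by
  set a := -(Real.pi / ω) with ha
  set b := Real.pi / ω with hb
  have hab : a ≤ b := by
    have : 0 < Real.pi / ω := div_pos Real.pi_pos hω
    linarith
  -- regularity facts
  have hu' : ContDiff ℝ 1 (deriv u) := (contDiff_succ_iff_deriv.mp (show ContDiff ℝ (1+1) u by norm_num; exact hu)).2.2
  have hΨ' : ContDiff ℝ 3 (deriv Ψ) := (contDiff_succ_iff_deriv.mp (show ContDiff ℝ (3+1) Ψ by norm_num; exact hΨ)).2.2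
  have hdu : Differentiable ℝ u := hu.differentiable (by norm_num)
  have hdu' : Differentiable ℝ (deriv u) := hu'.differentiable (by norm_num)
  have hdΨ' : Differentiable ℝ (deriv Ψ) := hΨ'.differentiable (by norm_num)
  -- F and its derivative
  set F : ℝ → ℝ := fun x => ν * deriv u x + u x * deriv Ψ x with hF
  have hderiv : ∀ x ∈ Set.uIcc a b,
      HasDerivAt F (-(2 * ν) * u x) x := by
    intro x hx
    rw [Set.uIcc_of_le hab] at hx
    have h1 : HasDerivAt (deriv u) (deriv (deriv u) x) x := (hdu' x).hasDerivAt
    have h2 : HasDerivAt u (deriv u x) x := (hdu x).hasDerivAt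
    have h3 : HasDerivAt (deriv Ψ) (deriv (deriv Ψ) x) x := (hdΨ' x).hasDerivAt
    have h : HasDerivAt F (ν * deriv (deriv u) x +
        (deriv u x * deriv Ψ x + u x * deriv (deriv Ψ) x)) x :=
      (h1.const_mul ν).add (h2.mul h3)
    have e1 := huΨ x hx
    have e2 := heq x hx
    have : ν * deriv (deriv u) x + (deriv u x * deriv Ψ x + u x * deriv (deriv Ψ) x)
        = -(2 * ν) * u x := by
      rw [← e1]; nlinarith [e2]
    rwa [this] at h
  have hint : IntervalIntegrable (fun x => -(2 * ν) * u x) MeasureTheory.volume a b :=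
    (continuous_const.mul hu.continuous).intervalIntegrable a b
  have key : ∫ x in a..b, -(2 * ν) * u x = F b - F a :=
    intervalIntegral.integral_eq_sub_of_hasDerivAt hderiv hint
  have hFb : F b = 0 := by simp [hF, hbu2, hbΨ2]
  have hFa : F a = 0 := by simp [hF, hbu1, hbΨ1]
  rw [hFa, hFb, sub_zero, intervalIntegral.integral_const_mul] at key
  have h2ν : -(2 * ν) ≠ 0 := by linarith
  exact (mul_eq_zero.mp key).resolve_left h2ν
end

section
/- Let Ψ(r,θ) be a smooth function, define u = ∂²Ψ/∂θ² + r²∂²Ψ/∂r² + r∂Ψ/∂r, and suppose Ψ satisfies Neumann conditions ∂Ψ/∂θ = ∂u/∂θ = 0 at θ = ±π/ω for all r, Ψ and its r-derivatives vanish at r = 0 and r = r_M, and ∫_Ω u dθ = 0 for all r. Then ∫₀^{r_M} ∫_{-π/ω}^{π/ω} (1/r)[u·Ψ_{θθr} + Ψ_{θθ}·(Ψ_{θθr} - Ψ_{θθ}/r)] dθ dr = -½ ∫₀^{r_M} ∫_{-π/ω}^{π/ω} (Ψ_{θr})² dθ dr, where subscripts denote partial derivatives. -/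
/-!
Write `v = Ψ_θθ`, `w = Ψ_θr`, `R(r) = ∫ v² dθ` and `Q(r) = ∫ w² dθ`. Since
`u = v + r² Ψ_rr + r Ψ_r`, the integrand is `2 v v_r / r - v² / r² + (r Ψ_rr + Ψ_r) Ψ_θθr`.
Integrating the last term by parts in `θ` (where `Ψ_θθr = ∂_θ w` and `w` vanishes at `θ = ±π/ω`)
turns the inner integral into
`R'/r - R/r² - (r/2) Q' - Q = (R/r - r Q/2)' - Q/2`.
The derivative integrates to zero over `(0, r_M)`: `R/r - r Q/2` vanishes at `r_M`, and since
`Ψ(0, ·) = 0` gives `v = O(r)`, we get `R = O(r²)` and `R' = O(r)`, so `R/r → 0` at `0` and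
`R'/r - R/r²` stays bounded.
-/

open intervalIntegral Set Filter Topology

/-- Partial derivative in the first (r) variable. -/
noncomputable def pdR (F : ℝ → ℝ → ℝ) : ℝ → ℝ → ℝ :=
  fun r θ => deriv (fun r' => F r' θ) r

/-- Partial derivative in the second (θ) variable. -/
noncomputable def pdT (F : ℝ → ℝ → ℝ) : ℝ → ℝ → ℝ :=
  fun r θ => deriv (fun θ' => F r θ') θ

section PartialDerivatives

variable {E : Type*} [NormedAddCommGroup E] [NormedSpace ℝ E]

lemma hasDerivAt_comp_prodMk_left {f : ℝ × ℝ → E} {r θ : ℝ}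
    (hf : DifferentiableAt ℝ f (r, θ)) :
    HasDerivAt (fun r' => f (r', θ)) (fderiv ℝ f (r, θ) (1, 0)) r :=
  hf.hasFDerivAt.comp_hasDerivAt_of_eq r ((hasDerivAt_id r).prodMk (hasDerivAt_const r θ)) rfl

lemma hasDerivAt_comp_prodMk_right {f : ℝ × ℝ → E} {r θ : ℝ}
    (hf : DifferentiableAt ℝ f (r, θ)) :
    HasDerivAt (fun θ' => f (r, θ')) (fderiv ℝ f (r, θ) (0, 1)) θ :=
  hf.hasFDerivAt.comp_hasDerivAt_of_eq θ ((hasDerivAt_const θ r).prodMk (hasDerivAt_id θ)) rfl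

variable {F : ℝ → ℝ → ℝ}

lemma pdR_eq_fderiv (hF : Differentiable ℝ ↿F) (r θ : ℝ) :
    pdR F r θ = fderiv ℝ ↿F (r, θ) (1, 0) :=
  (hasDerivAt_comp_prodMk_left (hF (r, θ))).deriv

lemma pdT_eq_fderiv (hF : Differentiable ℝ ↿F) (r θ : ℝ) :
    pdT F r θ = fderiv ℝ ↿F (r, θ) (0, 1) :=
  (hasDerivAt_comp_prodMk_right (hF (r, θ))).deriv

lemma hasDerivAt_pdR (hF : Differentiable ℝ ↿F) (r θ : ℝ) :
    HasDerivAt (fun r' => F r' θ) (pdR F r θ) r :=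
  pdR_eq_fderiv hF r θ ▸ hasDerivAt_comp_prodMk_left (hF (r, θ))

lemma hasDerivAt_pdT (hF : Differentiable ℝ ↿F) (r θ : ℝ) :
    HasDerivAt (fun θ' => F r θ') (pdT F r θ) θ :=
  pdT_eq_fderiv hF r θ ▸ hasDerivAt_comp_prodMk_right (hF (r, θ))

lemma contDiff_pdR {m n : WithTop ℕ∞} (hF : ContDiff ℝ n ↿F) (hmn : m + 1 ≤ n) :
    ContDiff ℝ m ↿(pdR F) := by
  have hd : Differentiable ℝ ↿F := hF.differentiable (lt_of_lt_of_le (by positivity) hmn).ne'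
  have : ↿(pdR F) = fun p => fderiv ℝ ↿F p (1, 0) := funext fun p => pdR_eq_fderiv hd p.1 p.2
  rw [this]
  exact (hF.fderiv_right hmn).clm_apply contDiff_const

lemma contDiff_pdT {m n : WithTop ℕ∞} (hF : ContDiff ℝ n ↿F) (hmn : m + 1 ≤ n) :
    ContDiff ℝ m ↿(pdT F) := by
  have hd : Differentiable ℝ ↿F := hF.differentiable (lt_of_lt_of_le (by positivity) hmn).ne'
  have : ↿(pdT F) = fun p => fderiv ℝ ↿F p (0, 1) := funext fun p => pdT_eq_fderiv hd p.1 p.2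
  rw [this]
  exact (hF.fderiv_right hmn).clm_apply contDiff_const

lemma pdR_pdT_comm (hF : ContDiff ℝ 2 ↿F) : pdR (pdT F) = pdT (pdR F) := by
  have hd : Differentiable ℝ ↿F := hF.differentiable two_ne_zero
  have hd' : Differentiable ℝ (fderiv ℝ ↿F) :=
    (hF.fderiv_right (m := 1) (by norm_num)).differentiable one_ne_zero
  ext r θ
  have hRT : HasDerivAt (fun r' => pdT F r' θ)
      (fderiv ℝ (fderiv ℝ ↿F) (r, θ) (1, 0) (0, 1)) r := by
    simp only [pdT_eq_fderiv hd]
    exact (hasDerivAt_comp_prodMk_left (hd' (r, θ))).clm_apply (hasDerivAt_const r _)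
      |>.congr_deriv (by simp)
  have hTR : HasDerivAt (fun θ' => pdR F r θ')
      (fderiv ℝ (fderiv ℝ ↿F) (r, θ) (0, 1) (1, 0)) θ := by
    simp only [pdR_eq_fderiv hd]
    exact (hasDerivAt_comp_prodMk_right (hd' (r, θ))).clm_apply (hasDerivAt_const θ _)
      |>.congr_deriv (by simp)
  rw [pdR, pdT, hRT.deriv, hTR.deriv]
  exact (hF.contDiffAt.isSymmSndFDerivAt (by simp)).eq _ _

lemma pdR_eq_zero_of_forall {θ : ℝ} (h : ∀ r, F r θ = 0) (r : ℝ) : pdR F r θ = 0 := by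
  simp [pdR, h]

lemma pdT_eq_zero_of_forall {r : ℝ} (h : ∀ θ, F r θ = 0) (θ : ℝ) : pdT F r θ = 0 := by
  simp [pdT, h]

end PartialDerivatives

lemma hasDerivAt_intervalIntegral_of_continuous {F F' : ℝ → ℝ → ℝ}
    (hF : Continuous ↿F) (hF' : Continuous ↿F')
    (hd : ∀ r θ, HasDerivAt (fun r' => F r' θ) (F' r θ) r) (a b r : ℝ) :
    HasDerivAt (fun r => ∫ θ in a..b, F r θ) (∫ θ in a..b, F' r θ) r := by
  obtain ⟨C, hC⟩ := (isCompact_closedBall r 1 |>.prod isCompact_uIcc)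
    |>.exists_bound_of_continuousOn hF'.continuousOn
  refine (hasDerivAt_integral_of_dominated_loc_of_deriv_le (bound := fun _ => C)
    (Metric.ball_mem_nhds r zero_lt_one) ?_ ?_ ?_ ?_ intervalIntegrable_const ?_).2
  · exact .of_forall fun r' =>
      (hF.comp (continuous_const.prodMk continuous_id)).aestronglyMeasurable
  · exact (hF.comp (continuous_const.prodMk continuous_id)).intervalIntegrable a b
  · exact (hF'.comp (continuous_const.prodMk continuous_id)).aestronglyMeasurable
  · exact Eventually.of_forall fun θ hθ r' hr' =>
      hC (r', θ) ⟨Metric.ball_subset_closedBall hr', uIoc_subset_uIcc hθ⟩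
  · exact Eventually.of_forall fun θ _ r' _ => hd r' θ

lemma exists_integral_sq_bound {v v' : ℝ → ℝ → ℝ} (hv' : Continuous ↿v')
    (hv : ∀ r θ, HasDerivAt (fun r' => v r' θ) (v' r θ) r) (hv0 : ∀ θ, v 0 θ = 0)
    (a b rM : ℝ) :
    ∃ C, ∀ r ∈ Ioc 0 rM, |∫ θ in a..b, v r θ ^ 2| ≤ C * r ^ 2 ∧
      |∫ θ in a..b, 2 * v r θ * v' r θ| ≤ C * r := by
  obtain ⟨K, hK⟩ := (isCompact_Icc (a := 0) (b := rM) |>.prod isCompact_uIcc)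
    |>.exists_bound_of_continuousOn hv'.continuousOn
  have hv'K : ∀ r ∈ Icc 0 rM, ∀ θ ∈ uIcc a b, |v' r θ| ≤ K := fun r hr θ hθ =>
    hK (r, θ) ⟨hr, hθ⟩
  have hvK : ∀ r ∈ Icc 0 rM, ∀ θ ∈ uIcc a b, |v r θ| ≤ K * r := by
    intro r hr θ hθ
    simpa [hv0] using norm_image_sub_le_of_norm_deriv_le_segment'
      (fun r' _ => (hv r' θ).hasDerivWithinAt)
      (fun r' hr' => hv'K r' (Ico_subset_Icc_self hr') θ hθ) r hr
  refine ⟨2 * K ^ 2 * |b - a|, fun r hr => ?_⟩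
  have hr' : r ∈ Icc 0 rM := Ioc_subset_Icc_self hr
  have hK0 : 0 ≤ K := (abs_nonneg _).trans (hv'K r hr' a left_mem_uIcc)
  have hsq : ∀ θ ∈ uIoc a b, ‖v r θ ^ 2‖ ≤ 2 * K ^ 2 * r ^ 2 := fun θ hθ => by
    have := hvK r hr' θ (uIoc_subset_uIcc hθ)
    rw [Real.norm_eq_abs, abs_pow]
    nlinarith [abs_nonneg (v r θ), sq_nonneg (K * r)]
  have hprod : ∀ θ ∈ uIoc a b, ‖2 * v r θ * v' r θ‖ ≤ 2 * K ^ 2 * r := fun θ hθ => by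
    have h1 := hvK r hr' θ (uIoc_subset_uIcc hθ)
    have h2 := hv'K r hr' θ (uIoc_subset_uIcc hθ)
    rw [Real.norm_eq_abs, abs_mul, abs_mul, abs_two]
    nlinarith [abs_nonneg (v r θ), abs_nonneg (v' r θ)]
  constructor
  · simpa [mul_comm, mul_left_comm, mul_assoc] using norm_integral_le_of_norm_le_const hsq
  · simpa [mul_comm, mul_left_comm, mul_assoc] using norm_integral_le_of_norm_le_const hprod

lemma integral_angular_identity {v v' w w' A B : ℝ → ℝ} {a b r : ℝ} (hr : r ≠ 0)
    (hv : Continuous v) (hv' : Continuous v') (hw' : Continuous w')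
    (hwv : ∀ θ, HasDerivAt w (v' θ) θ) (hA : ∀ θ, HasDerivAt A (w' θ) θ)
    (hB : ∀ θ, HasDerivAt B (w θ) θ) (ha : w a = 0) (hb : w b = 0) :
    ∫ θ in a..b, 1 / r * ((v θ + r ^ 2 * A θ + r * B θ) * v' θ + v θ * (v' θ - v θ / r))
      = (∫ θ in a..b, 2 * v θ * v' θ) / r - (∫ θ in a..b, v θ ^ 2) / r ^ 2
        - r / 2 * (∫ θ in a..b, 2 * w θ * w' θ) - ∫ θ in a..b, w θ ^ 2 := by
  have hw : Continuous w := continuous_iff_continuousAt.2 fun θ => (hwv θ).continuousAt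
  have hA' : Continuous A := continuous_iff_continuousAt.2 fun θ => (hA θ).continuousAt
  have hB' : Continuous B := continuous_iff_continuousAt.2 fun θ => (hB θ).continuousAt
  have hibp : ∫ θ in a..b, (r * A θ + B θ) * v' θ = -∫ θ in a..b, (r * w' θ + w θ) * w θ := by
    simpa [ha, hb] using integral_mul_deriv_eq_deriv_mul
      (fun θ _ => ((hA θ).const_mul r).add (hB θ)) (fun θ _ => hwv θ)
      ((continuous_const.mul hw').add hw |>.intervalIntegrable a b) (hv'.intervalIntegrable a b)
  have hsplit : ∀ θ, 1 / r * ((v θ + r ^ 2 * A θ + r * B θ) * v' θ + v θ * (v' θ - v θ / r))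
      = r⁻¹ * (2 * v θ * v' θ) - (r ^ 2)⁻¹ * v θ ^ 2 + (r * A θ + B θ) * v' θ := fun θ => by
    field_simp
    ring
  have hsplit' : ∀ θ, (r * w' θ + w θ) * w θ = r / 2 * (2 * w θ * w' θ) + w θ ^ 2 := fun θ => by
    ring
  simp only [hsplit, hsplit'] at hibp ⊢
  rw [intervalIntegral.integral_add, intervalIntegral.integral_sub, integral_const_mul,
    integral_const_mul, hibp, intervalIntegral.integral_add, integral_const_mul]
  · ring
  all_goals exact Continuous.intervalIntegrable (by fun_prop) _ _

lemma integral_radial_identity {R R' Q Q' : ℝ → ℝ} {rM C : ℝ} (hrM : 0 < rM)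
    (hR : ∀ r, HasDerivAt R (R' r) r) (hQ : ∀ r, HasDerivAt Q (Q' r) r)
    (hR' : Continuous R') (hQ' : Continuous Q') (hRM : R rM = 0) (hQM : Q rM = 0)
    (hRC : ∀ r ∈ Ioc 0 rM, |R r| ≤ C * r ^ 2) (hR'C : ∀ r ∈ Ioc 0 rM, |R' r| ≤ C * r) :
    ∫ r in 0..rM, (R' r / r - R r / r ^ 2 - r / 2 * Q' r - Q r)
      = -(1 / 2) * ∫ r in 0..rM, Q r := by
  have hRc : Continuous R := continuous_iff_continuousAt.2 fun r => (hR r).continuousAt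
  have hQc : Continuous Q := continuous_iff_continuousAt.2 fun r => (hQ r).continuousAt
  set D : ℝ → ℝ := fun r => R r / r - r / 2 * Q r with hD
  have hD' : ∀ r ∈ Ioo 0 rM,
      HasDerivAt D (R' r / r - R r / r ^ 2 - r / 2 * Q' r - Q r + Q r / 2) r := fun r hr => by
    refine ((hR r).div (hasDerivAt_id r) hr.1.ne').sub
      (((hasDerivAt_id r).div_const 2).mul (hQ r)) |>.congr_deriv ?_
    have := hr.1.ne'
    simp only [id]
    field_simp
    ring
  have hD0 : Tendsto D (𝓝[>] 0) (𝓝 0) := by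
    have hRr : Tendsto (fun r => R r / r) (𝓝[>] 0) (𝓝 0) := by
      have hCr : Tendsto (fun r => C * r) (𝓝[>] 0) (𝓝 0) :=
        ((continuous_const_mul C).tendsto' 0 0 (by simp)).mono_left nhdsWithin_le_nhds
      refine squeeze_zero_norm' ?_ hCr
      filter_upwards [Ioc_mem_nhdsGT hrM] with r hr
      rw [Real.norm_eq_abs, abs_div, abs_of_pos hr.1, div_le_iff₀ hr.1]
      linarith [hRC r hr]
    have hrQ : Tendsto (fun r => r / 2 * Q r) (𝓝[>] 0) (𝓝 0) :=
      (((continuous_id.div_const 2).mul hQc).tendsto' 0 0 (by simp)).mono_left nhdsWithin_le_nhds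
    simpa using hRr.sub hrQ
  have hDM : Tendsto D (𝓝[<] rM) (𝓝 0) := by
    have : ContinuousAt D rM :=
      (hRc.continuousAt.div continuousAt_id hrM.ne').sub
        ((continuousAt_id.div_const 2).mul hQc.continuousAt)
    simpa [hD, hRM, hQM] using this.tendsto.mono_left nhdsWithin_le_nhds
  have hsing : IntervalIntegrable (fun r => R' r / r - R r / r ^ 2)
      MeasureTheory.volume 0 rM := by
    refine IntervalIntegrable.mono_fun' (g := fun _ => 2 * C) intervalIntegrable_const
      ((hR'.measurable.div measurable_id).sub
        (hRc.measurable.div (measurable_id.pow_const 2))).aestronglyMeasurable ?_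
    rw [EventuallyLE, MeasureTheory.ae_restrict_iff' measurableSet_uIoc]
    refine .of_forall fun r hr => ?_
    rw [uIoc_of_le hrM.le] at hr
    have h1 : |R' r / r| ≤ C := by
      rw [abs_div, abs_of_pos hr.1, div_le_iff₀ hr.1]; exact hR'C r hr
    have h2 : |R r / r ^ 2| ≤ C := by
      rw [abs_div, abs_of_pos (pow_pos hr.1 2), div_le_iff₀ (pow_pos hr.1 2)]; exact hRC r hr
    rw [Real.norm_eq_abs]
    linarith [abs_sub (R' r / r) (R r / r ^ 2)]
  have hint : IntervalIntegrable (fun r => R' r / r - R r / r ^ 2 - r / 2 * Q' r - Q r)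
      MeasureTheory.volume 0 rM :=
    (hsing.sub ((continuous_id.div_const 2).mul hQ' |>.intervalIntegrable 0 rM)).sub
      (hQc.intervalIntegrable 0 rM)
  have hQ2 : IntervalIntegrable (fun r => Q r / 2) MeasureTheory.volume 0 rM :=
    (hQc.div_const 2).intervalIntegrable 0 rM
  have hFTC := integral_eq_sub_of_hasDerivAt_of_tendsto hrM hD' (hint.add hQ2) hD0 hDM
  rw [intervalIntegral.integral_add hint hQ2, intervalIntegral.integral_div, sub_self] at hFTC
  linarith

theorem integral_identity_of_mixed_partials {v w A B : ℝ → ℝ → ℝ} {a b rM : ℝ} (hrM : 0 < rM)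
    (hv : ContDiff ℝ 1 ↿v) (hw : ContDiff ℝ 1 ↿w) (hA : ContDiff ℝ 1 ↿A) (hB : ContDiff ℝ 1 ↿B)
    (hwv : pdT w = pdR v) (hAw : pdT A = pdR w) (hBw : pdT B = w)
    (hv0 : ∀ θ, v 0 θ = 0) (hvM : ∀ θ, v rM θ = 0) (hwM : ∀ θ, w rM θ = 0)
    (ha : ∀ r, w r a = 0) (hb : ∀ r, w r b = 0) :
    ∫ r in 0..rM, ∫ θ in a..b, 1 / r * ((v r θ + r ^ 2 * A r θ + r * B r θ) * pdR v r θ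
        + v r θ * (pdR v r θ - v r θ / r))
      = -(1 / 2) * ∫ r in 0..rM, ∫ θ in a..b, w r θ ^ 2 := by
  have hvd := hv.differentiable one_ne_zero
  have hwd := hw.differentiable one_ne_zero
  have hv' : Continuous ↿(pdR v) := (contDiff_pdR hv (m := 0) (by simp)).continuous
  have hw' : Continuous ↿(pdR w) := (contDiff_pdR hw (m := 0) (by simp)).continuous
  have hR := hasDerivAt_intervalIntegral_of_continuous (hv.continuous.pow 2)
    ((continuous_const.mul hv.continuous).mul hv')
    (fun r θ => by simpa using (hasDerivAt_pdR hvd r θ).pow 2) a b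
  have hQ := hasDerivAt_intervalIntegral_of_continuous (hw.continuous.pow 2)
    ((continuous_const.mul hw.continuous).mul hw')
    (fun r θ => by simpa using (hasDerivAt_pdR hwd r θ).pow 2) a b
  obtain ⟨C, hC⟩ := exists_integral_sq_bound hv' (hasDerivAt_pdR hvd) hv0 a b rM
  calc
    _ = ∫ r in 0..rM, ((∫ θ in a..b, 2 * v r θ * pdR v r θ) / r
          - (∫ θ in a..b, v r θ ^ 2) / r ^ 2 - r / 2 * (∫ θ in a..b, 2 * w r θ * pdR w r θ)
          - ∫ θ in a..b, w r θ ^ 2) := by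
      refine integral_congr_ae (.of_forall fun r hr => ?_)
      rw [uIoc_of_le hrM.le] at hr
      refine integral_angular_identity hr.1.ne' (hv.continuous.uncurry_left r)
        (hv'.uncurry_left r) (hw'.uncurry_left r) (fun θ => ?_) (fun θ => ?_) (fun θ => ?_)
        (ha r) (hb r)
      · exact hwv ▸ hasDerivAt_pdT hwd r θ
      · exact hAw ▸ hasDerivAt_pdT (hA.differentiable one_ne_zero) r θ
      · exact hBw ▸ hasDerivAt_pdT (hB.differentiable one_ne_zero) r θ
    _ = _ := integral_radial_identity hrM hR hQ
      (continuous_parametric_intervalIntegral_of_continuous'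
        ((continuous_const.mul hv.continuous).mul hv') a b)
      (continuous_parametric_intervalIntegral_of_continuous'
        ((continuous_const.mul hw.continuous).mul hw') a b)
      (by simp [hvM]) (by simp [hwM]) (fun r hr => (hC r hr).1) (fun r hr => (hC r hr).2)

theorem stmt_17_general (ω rM : ℝ) (hrM : 0 < rM)
    (Ψ : ℝ → ℝ → ℝ) (hΨ : ContDiff ℝ 4 (fun p : ℝ × ℝ => Ψ p.1 p.2))
    (u : ℝ → ℝ → ℝ)
    (hu : u = fun r θ => pdT (pdT Ψ) r θ + r ^ 2 * pdR (pdR Ψ) r θ + r * pdR Ψ r θ)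
    (hNeuΨ : ∀ r : ℝ, pdT Ψ r (-(Real.pi / ω)) = 0 ∧ pdT Ψ r (Real.pi / ω) = 0)
    (hr0 : ∀ θ : ℝ, Ψ 0 θ = 0 ∧ pdR Ψ 0 θ = 0)
    (hrM' : ∀ θ : ℝ, Ψ rM θ = 0 ∧ pdR Ψ rM θ = 0) :
    (∫ r in (0 : ℝ)..rM, ∫ θ in (-(Real.pi / ω))..(Real.pi / ω),
        (1 / r) * (u r θ * pdR (pdT (pdT Ψ)) r θ
          + pdT (pdT Ψ) r θ * (pdR (pdT (pdT Ψ)) r θ - pdT (pdT Ψ) r θ / r)))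
      = -(1 / 2) * ∫ r in (0 : ℝ)..rM, ∫ θ in (-(Real.pi / ω))..(Real.pi / ω),
          (pdR (pdT Ψ) r θ) ^ 2 := by
  subst hu
  have hT : ContDiff ℝ 3 ↿(pdT Ψ) := contDiff_pdT hΨ (by norm_num)
  have hR : ContDiff ℝ 3 ↿(pdR Ψ) := contDiff_pdR hΨ (by norm_num)
  have hΨ_comm := pdR_pdT_comm (hΨ.of_le (by norm_num))
  have hT_comm := pdR_pdT_comm (hT.of_le (by norm_num))
  have hR_comm := pdR_pdT_comm (hR.of_le (by norm_num))
  refine integral_identity_of_mixed_partials hrM (contDiff_pdT hT (by norm_num))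
    (contDiff_pdR hT (by norm_num)) (contDiff_pdR hR (by norm_num)) (hR.of_le (by norm_num))
    hT_comm.symm (by rw [← hR_comm, hΨ_comm]) hΨ_comm.symm ?_ ?_ ?_ ?_ ?_
  · exact pdT_eq_zero_of_forall (pdT_eq_zero_of_forall fun θ => (hr0 θ).1)
  · exact pdT_eq_zero_of_forall (pdT_eq_zero_of_forall fun θ => (hrM' θ).1)
  · exact fun θ => hΨ_comm ▸ pdT_eq_zero_of_forall (fun θ => (hrM' θ).2) θ
  · exact pdR_eq_zero_of_forall fun r => (hNeuΨ r).1
  · exact pdR_eq_zero_of_forall fun r => (hNeuΨ r).2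

/-- The 2D integral identity (11.5)-(11.6): under Neumann conditions in θ, vanishing of Ψ and
its radial derivative at r = 0 and r = r_M, and zero angular average of u, the double integral
of (1/r)[u Ψ_θθr + Ψ_θθ(Ψ_θθr - Ψ_θθ/r)] equals -½ ∬ (Ψ_θr)². -/
theorem stmt_17 (ω rM : ℝ) (hω : 0 < ω) (hrM : 0 < rM)
    (Ψ : ℝ → ℝ → ℝ) (hΨ : ContDiff ℝ 4 (fun p : ℝ × ℝ => Ψ p.1 p.2))
    (u : ℝ → ℝ → ℝ)
    (hu : u = fun r θ => pdT (pdT Ψ) r θ + r ^ 2 * pdR (pdR Ψ) r θ + r * pdR Ψ r θ)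
    (hNeuΨ : ∀ r : ℝ, pdT Ψ r (-(Real.pi / ω)) = 0 ∧ pdT Ψ r (Real.pi / ω) = 0)
    (hNeuu : ∀ r : ℝ, pdT u r (-(Real.pi / ω)) = 0 ∧ pdT u r (Real.pi / ω) = 0)
    (hr0 : ∀ θ : ℝ, Ψ 0 θ = 0 ∧ pdR Ψ 0 θ = 0)
    (hrM' : ∀ θ : ℝ, Ψ rM θ = 0 ∧ pdR Ψ rM θ = 0)
    (havg : ∀ r : ℝ, (∫ θ in (-(Real.pi / ω))..(Real.pi / ω), u r θ) = 0) :
    (∫ r in (0 : ℝ)..rM, ∫ θ in (-(Real.pi / ω))..(Real.pi / ω),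
        (1 / r) * (u r θ * pdR (pdT (pdT Ψ)) r θ
          + pdT (pdT Ψ) r θ * (pdR (pdT (pdT Ψ)) r θ - pdT (pdT Ψ) r θ / r)))
      = -(1 / 2) * ∫ r in (0 : ℝ)..rM, ∫ θ in (-(Real.pi / ω))..(Real.pi / ω),
          (pdR (pdT Ψ) r θ) ^ 2 :=
  stmt_17_general ω rM hrM Ψ hΨ u hu hNeuΨ hr0 hrM'
end
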